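/- Let p ∈ frontier Z be a simple nondegenerate point with associated neighborhood U_p. Suppose there exist ρ > 0, an open neighborhood U of p, and b : ℝ → ℝ continuous and strictly positive on (0, ρ] with t ↦ (b t)⁻¹ NOT Lebesgue integrable on (0, ρ), such that ‖∇f x‖ ≤ b (f x) for every x ∈ U with 0 < f x ≤ ρ. Then for every compact set K ⊆ U ∩ U_p that is a neighborhood of p and every ρ' ∈ (0, ρ] such that {x ∈ K | f x = t} is nonempty for all t ∈ (0, ρ'), the function β^K is NOT Lebesgue integrable on (0, ρ'). -/
import Mathlib


open Set MeasureTheory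

variable {n : ℕ}

noncomputable def betaK (f : EuclideanSpace ℝ (Fin n) → ℝ)
    (K : Set (EuclideanSpace ℝ (Fin n))) (t : ℝ) : ℝ :=
  sInf {y : ℝ | ∃ x ∈ K, f x = t ∧ y = ‖gradient f x‖⁻¹}

theorem opposite_gradient_inequality_implies_beta_not_integrable (n : ℕ) (hn : 1 ≤ n)
    (f : EuclideanSpace ℝ (Fin n) → ℝ)
    (hf : Continuous f) (hf0 : ∀ x, 0 ≤ f x)
    (hZ : (f ⁻¹' {0}).Nonempty)
    (hC1 : ContDiffOn ℝ 1 f (f ⁻¹' {0})ᶜ)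
    (p : EuclideanSpace ℝ (Fin n)) (hp : p ∈ frontier (f ⁻¹' {0}))
    (Up : Set (EuclideanSpace ℝ (Fin n))) (hUp : IsOpen Up) (hpUp : p ∈ Up)
    (hsimple : ∀ x ∈ Up, f x ≠ 0 → gradient f x ≠ 0)
    (ρ : ℝ) (hρ : 0 < ρ)
    (U : Set (EuclideanSpace ℝ (Fin n))) (hU : IsOpen U) (hpU : p ∈ U)
    (b : ℝ → ℝ) (hb_cont : ContinuousOn b (Ioc 0 ρ))
    (hb_pos : ∀ t ∈ Ioc (0:ℝ) ρ, 0 < b t)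
    (hb_not_int : ¬ IntegrableOn (fun t => (b t)⁻¹) (Ioo 0 ρ))
    (hgrad : ∀ x ∈ U, 0 < f x → f x ≤ ρ → ‖gradient f x‖ ≤ b (f x)) :
    ∀ K : Set (EuclideanSpace ℝ (Fin n)), IsCompact K → K ⊆ U ∩ Up → K ∈ nhds p →
      ∀ ρ' ∈ Ioc (0:ℝ) ρ, (∀ t ∈ Ioo (0:ℝ) ρ', {x ∈ K | f x = t}.Nonempty) →
        ¬ IntegrableOn (betaK f K) (Ioo 0 ρ') := by
  intro K hK hKsub hKnhds ρ' hρ' hne hint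
  apply hb_not_int
  -- key bound : (b t)⁻¹ ≤ betaK f K t on Ioo 0 ρ'
  have key : ∀ t ∈ Ioo (0:ℝ) ρ', (b t)⁻¹ ≤ betaK f K t := by
    intro t ht
    have htIoc : t ∈ Ioc (0:ℝ) ρ := ⟨ht.1, le_trans ht.2.le hρ'.2⟩
    obtain ⟨x, hxK, hxt⟩ := hne t ht
    refine le_csInf ⟨‖gradient f x‖⁻¹, ⟨x, hxK, hxt, rfl⟩⟩ ?_
    rintro y ⟨z, hzK, hzt, rfl⟩
    have hzU : z ∈ U := (hKsub hzK).1
    have hzUp : z ∈ Up := (hKsub hzK).2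
    have hfz : 0 < f z := hzt ▸ ht.1
    have hgz : gradient f z ≠ 0 := hsimple z hzUp (ne_of_gt hfz)
    have hbz : ‖gradient f z‖ ≤ b t := by
      have := hgrad z hzU hfz (hzt ▸ htIoc.2)
      rwa [hzt] at this
    exact inv_anti₀ (norm_pos_iff.mpr hgz) hbz
  -- b⁻¹ is integrable on Ioo 0 ρ' by comparison
  have hmeas : AEStronglyMeasurable (fun t => (b t)⁻¹)
      (volume.restrict (Ioo 0 ρ')) := by
    have hc : ContinuousOn (fun t => (b t)⁻¹) (Ioo 0 ρ') := by
      apply ContinuousOn.inv₀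
      · exact hb_cont.mono fun t ht => ⟨ht.1, le_trans ht.2.le hρ'.2⟩
      · exact fun t ht => ne_of_gt (hb_pos t ⟨ht.1, le_trans ht.2.le hρ'.2⟩)
    exact hc.aestronglyMeasurable measurableSet_Ioo
  have h1 : IntegrableOn (fun t => (b t)⁻¹) (Ioo 0 ρ') := by
    apply Integrable.mono hint hmeas
    rw [ae_restrict_iff' measurableSet_Ioo]
    filter_upwards with t ht
    have hbt : 0 < b t := hb_pos t ⟨ht.1, le_trans ht.2.le hρ'.2⟩
    rw [Real.norm_eq_abs, Real.norm_eq_abs, abs_of_pos (inv_pos.mpr hbt)]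
    exact le_trans (key t ht) (le_abs_self _)
  -- b⁻¹ is integrable on Icc ρ' ρ by continuity
  have h2 : IntegrableOn (fun t => (b t)⁻¹) (Icc ρ' ρ) := by
    have hc : ContinuousOn (fun t => (b t)⁻¹) (Icc ρ' ρ) := by
      apply ContinuousOn.inv₀
      · exact hb_cont.mono fun t ht => ⟨lt_of_lt_of_le hρ'.1 ht.1, ht.2⟩
      · exact fun t ht => ne_of_gt (hb_pos t ⟨lt_of_lt_of_le hρ'.1 ht.1, ht.2⟩)
    exact hc.integrableOn_compact isCompact_Icc
  exact (h1.union h2).mono_set fun t ht => by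
    rcases le_or_gt ρ' t with h | h
    · exact Or.inr ⟨h, ht.2.le⟩
    · exact Or.inl ⟨ht.1, h⟩
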